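/- arXiv:1205.6220 — 2 statements merged into one kernel-verified Lean document; each statement's English description precedes it below -/
import Mathlib

section
/- Let A be a real (d×d) matrix, c ∈ ℝ^d, r(0) ∈ ℝ^d, and R the Laplace transform of the solution of r' = A r + c. Given d+1 points s_1,...,s_{d+1} in the domain of convergence, define the (d+1)×(d+1) matrix C whose k-th column is (s_k R(s_k); 1) and the d×(d+1) matrix D whose k-th column is s_k² R(s_k) - s_k r(0). If C is invertible, then the augmented matrix T = (A | c) satisfies T = D C⁻¹; in particular A and c are uniquely determined by the values R(s_k) and r(0). -/
/-- From `d + 1` Laplace-domain samples satisfying `s² R(s) - s r(0) = A (s R(s)) + c`,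
the augmented matrix `T = (A | c)` is recovered as `T = D C⁻¹`, where `C` has columns
`(sₖ R(sₖ); 1)` and `D` has columns `sₖ² R(sₖ) - sₖ r(0)`; in particular `A` and `c` are
uniquely determined by the values `R(sₖ)` and `r(0)`. -/
theorem laplace_samples_determine_generator {d : ℕ}
    (A : Matrix (Fin d) (Fin d) ℝ) (c r0 : Fin d → ℝ)
    (s : Fin (d + 1) → ℝ) (R : Fin (d + 1) → Fin d → ℝ)
    (hR : ∀ k, (s k ^ 2) • R k - s k • r0 = A.mulVec (s k • R k) + c)
    (C : Matrix (Fin (d + 1)) (Fin (d + 1)) ℝ)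
    (hC : ∀ i k, C i k = if h : (i : ℕ) < d then s k * R k ⟨i, h⟩ else 1)
    (D : Matrix (Fin d) (Fin (d + 1)) ℝ)
    (hD : ∀ i k, D i k = s k ^ 2 * R k i - s k * r0 i)
    (T : Matrix (Fin d) (Fin (d + 1)) ℝ)
    (hT : ∀ i j, T i j = if h : (j : ℕ) < d then A i ⟨j, h⟩ else c i)
    (hCinv : IsUnit C.det) :
    T = D * C⁻¹ := by
  have hTC : T * C = D := by
    ext i k
    have hRk := congrFun (hR k) i
    simp only [Pi.sub_apply, Pi.add_apply, Pi.smul_apply, smul_eq_mul] at hRk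
    have : (T * C) i k = (∑ j : Fin d, A i j * (s k * R k j)) + c i := by
      rw [Matrix.mul_apply, Fin.sum_univ_castSucc]
      congr 1
      · refine Finset.sum_congr rfl fun j _ => ?_
        rw [hT, hC]
        simp [Fin.castSucc, Fin.is_lt]
      · rw [hT, hC]
        simp [Fin.last]
    rw [this, hD, hRk]
    simp [Matrix.mulVec, dotProduct, mul_comm, mul_left_comm]
  calc T = T * C * C⁻¹ := by rw [Matrix.mul_nonsing_inv_cancel_right _ _ hCinv]
    _ = D * C⁻¹ := by rw [hTC]
end

section
/- The signal of the dephasing qubit model is invariant under rotation about the z-axis: if R_θ is the 3×3 rotation matrix about the z-axis by angle θ, and A(h, v) denotes the dephasing Bloch matrix with Hamiltonian vector h = (h_x,h_y,h_z) and dephasing vector v = (α,β,γ), then R_θ A(h,v) R_θᵀ = A(R_θ h, R_θ v). Consequently, for initial state r(0) = (0,0,1)ᵀ (fixed by R_θ), the z-component of the trajectory, e₃ᵀ exp(tA(h,v)) r(0), is unchanged when (h,v) is replaced by (R_θ h, R_θ v). -/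
/-!
Writing `[h]×` for the matrix of `x ↦ h × x`, the Bloch matrix decomposes as
`A(h, v) = [h]× + v vᵀ - |v|² I`. Each summand is equivariant under conjugation by any
`R ∈ SO(3)`: for `[h]×` this is `R (a × b) = R a × R b`, which follows from the cofactor identity
`Rᵀ (R a × R b) = det R • (a × b)` (the triple product is a determinant). Since `Rᵀ = R⁻¹`, the
exponential commutes with the conjugation, and as `R_θ` fixes `e₃`, the entry `e₃ᵀ exp(tA) e₃`
does not change.
-/

open Matrix

def blochAv (h v : Fin 3 → ℝ) : Matrix (Fin 3) (Fin 3) ℝ :=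
  !![-(v 1 ^ 2 + v 2 ^ 2), -h 2 + v 0 * v 1, h 1 + v 0 * v 2;
     h 2 + v 0 * v 1, -(v 0 ^ 2 + v 2 ^ 2), -h 0 + v 1 * v 2;
     -h 1 + v 0 * v 2, h 0 + v 1 * v 2, -(v 0 ^ 2 + v 1 ^ 2)]

noncomputable def rotZ (θ : ℝ) : Matrix (Fin 3) (Fin 3) ℝ :=
  !![Real.cos θ, -Real.sin θ, 0;
     Real.sin θ, Real.cos θ, 0;
     0, 0, 1]

section Orthogonal

variable {n K : Type*} [Fintype n] [CommRing K]

lemma mul_vecMulVec_self_mul_transpose (R : Matrix n n K) (v : n → K) :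
    R * vecMulVec v v * Rᵀ = vecMulVec (R *ᵥ v) (R *ᵥ v) := by
  rw [mul_vecMulVec, vecMulVec_mul, vecMul_transpose]

variable [DecidableEq n] {R : Matrix n n K}

lemma dotProduct_mulVec_mulVec_of_mem_orthogonalGroup (hR : R ∈ orthogonalGroup n K)
    (x y : n → K) : (R *ᵥ x) ⬝ᵥ (R *ᵥ y) = x ⬝ᵥ y := by
  rw [dotProduct_mulVec, ← mulVec_transpose, mulVec_mulVec,
    (mem_orthogonalGroup_iff' n K).mp hR, one_mulVec]

lemma dotProduct_mulVec_conj_of_mulVec_eq_self (hR : R ∈ orthogonalGroup n K) {e : n → K}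
    (he : R *ᵥ e = e) (M : Matrix n n K) : e ⬝ᵥ (R * M * Rᵀ) *ᵥ e = e ⬝ᵥ M *ᵥ e := by
  have hRe : Rᵀ *ᵥ e = e := by
    conv_lhs => rw [← he]
    rw [mulVec_mulVec, (mem_orthogonalGroup_iff' n K).mp hR, one_mulVec]
  rw [← mulVec_mulVec, ← mulVec_mulVec, hRe, dotProduct_mulVec, ← mulVec_transpose, hRe]

end Orthogonal

lemma exp_conj_of_mem_orthogonalGroup {n : Type*} [Fintype n] [DecidableEq n]
    {R : Matrix n n ℝ} (hR : R ∈ orthogonalGroup n ℝ) (A : Matrix n n ℝ) :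
    NormedSpace.exp (R * A * Rᵀ) = R * NormedSpace.exp A * Rᵀ :=
  exp_units_conj ⟨R, Rᵀ, (mem_orthogonalGroup_iff n ℝ).mp hR,
    (mem_orthogonalGroup_iff' n ℝ).mp hR⟩ A

section CrossProduct

variable {K : Type*} [CommRing K]

def crossMatrix (h : Fin 3 → K) : Matrix (Fin 3) (Fin 3) K :=
  LinearMap.toMatrix' (crossProduct h)

lemma crossMatrix_mulVec (h x : Fin 3 → K) : crossMatrix h *ᵥ x = h ⨯₃ x :=
  LinearMap.toMatrix'_mulVec _ x

lemma transpose_mulVec_cross_mulVec (R : Matrix (Fin 3) (Fin 3) K) (a b : Fin 3 → K) :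
    Rᵀ *ᵥ ((R *ᵥ a) ⨯₃ (R *ᵥ b)) = R.det • (a ⨯₃ b) := by
  have hdet (c : Fin 3 → K) :
      det (of ![R *ᵥ c, R *ᵥ a, R *ᵥ b]) = det (of ![c, a, b]) * R.det := by
    rw [← det_transpose R, ← det_mul]
    congr 1
    ext i j
    fin_cases i <;> simp [mul_apply, mulVec, dotProduct, mul_comm]
  ext i
  calc (Rᵀ *ᵥ ((R *ᵥ a) ⨯₃ (R *ᵥ b))) i
      = (R *ᵥ Pi.single i 1) ⬝ᵥ ((R *ᵥ a) ⨯₃ (R *ᵥ b)) := by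
        rw [mulVec_transpose, dotProduct_comm, dotProduct_mulVec, dotProduct_single_one]
    _ = Pi.single i 1 ⬝ᵥ (a ⨯₃ b) * R.det := by
        rw [triple_product_eq_det, triple_product_eq_det]
        exact hdet _
    _ = (R.det • (a ⨯₃ b)) i := by
        rw [single_one_dotProduct, Pi.smul_apply, smul_eq_mul, mul_comm]

variable {R : Matrix (Fin 3) (Fin 3) K}

lemma mulVec_cross (hR : R ∈ specialOrthogonalGroup (Fin 3) K) (a b : Fin 3 → K) :
    R *ᵥ (a ⨯₃ b) = (R *ᵥ a) ⨯₃ (R *ᵥ b) := by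
  obtain ⟨hRo, hdet⟩ := mem_specialOrthogonalGroup_iff.mp hR
  rw [← one_smul K (a ⨯₃ b), ← hdet, ← transpose_mulVec_cross_mulVec, mulVec_mulVec,
    (mem_orthogonalGroup_iff _ K).mp hRo, one_mulVec]

lemma mul_crossMatrix_mul_transpose (hR : R ∈ specialOrthogonalGroup (Fin 3) K)
    (h : Fin 3 → K) : R * crossMatrix h * Rᵀ = crossMatrix (R *ᵥ h) := by
  refine toLin'.injective (LinearMap.ext fun x => ?_)
  rw [toLin'_apply, toLin'_apply, ← mulVec_mulVec, ← mulVec_mulVec, crossMatrix_mulVec,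
    crossMatrix_mulVec, mulVec_cross hR, mulVec_mulVec,
    (mem_orthogonalGroup_iff _ K).mp hR.1, one_mulVec]

end CrossProduct

lemma blochAv_eq_crossMatrix_add_vecMulVec_sub (h v : Fin 3 → ℝ) :
    blochAv h v = crossMatrix h + vecMulVec v v - (v ⬝ᵥ v) • 1 := by
  ext i j
  fin_cases i <;> fin_cases j <;>
    simp [blochAv, crossMatrix, LinearMap.toMatrix'_apply, cross_apply, vecMulVec_apply,
      dotProduct, Fin.sum_univ_three] <;> ring

lemma mul_blochAv_mul_transpose {R : Matrix (Fin 3) (Fin 3) ℝ}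
    (hR : R ∈ specialOrthogonalGroup (Fin 3) ℝ) (h v : Fin 3 → ℝ) :
    R * blochAv h v * Rᵀ = blochAv (R *ᵥ h) (R *ᵥ v) := by
  rw [blochAv_eq_crossMatrix_add_vecMulVec_sub, blochAv_eq_crossMatrix_add_vecMulVec_sub,
    mul_sub, mul_add, sub_mul, add_mul, mul_crossMatrix_mul_transpose hR,
    mul_vecMulVec_self_mul_transpose, dotProduct_mulVec_mulVec_of_mem_orthogonalGroup hR.1,
    Matrix.mul_smul, mul_one, Matrix.smul_mul, (mem_orthogonalGroup_iff _ ℝ).mp hR.1]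

lemma rotZ_mem_specialOrthogonalGroup (θ : ℝ) : rotZ θ ∈ specialOrthogonalGroup (Fin 3) ℝ := by
  refine mem_specialOrthogonalGroup_iff.mpr ⟨(mem_orthogonalGroup_iff _ _).mpr ?_, ?_⟩
  · ext i j
    fin_cases i <;> fin_cases j <;>
      simp [rotZ, mul_apply, Fin.sum_univ_three, one_apply, ← sq, mul_comm]
  · simp [rotZ, det_fin_three, ← sq]

lemma rotZ_mulVec_e3 (θ : ℝ) : rotZ θ *ᵥ ![0, 0, 1] = ![0, 0, 1] := by
  ext i
  fin_cases i <;> simp [rotZ, mulVec, dotProduct, Fin.sum_univ_three]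

/-- The dephasing-qubit signal is invariant under rotations about the z-axis:
`R_θ A(h,v) R_θᵀ = A(R_θ h, R_θ v)`, and consequently the z-component of the trajectory
from the initial state `(0,0,1)ᵀ` is unchanged when `(h, v)` is replaced by
`(R_θ h, R_θ v)`. -/
theorem blochA_rotZ_invariance (h v : Fin 3 → ℝ) (θ : ℝ) :
    rotZ θ * blochAv h v * (rotZ θ)ᵀ
        = blochAv ((rotZ θ).mulVec h) ((rotZ θ).mulVec v)
    ∧ ∀ t : ℝ,
        (NormedSpace.exp (t • blochAv h v)).mulVec ![0, 0, 1] 2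
          = (NormedSpace.exp
              (t • blochAv ((rotZ θ).mulVec h) ((rotZ θ).mulVec v))).mulVec ![0, 0, 1] 2 := by
  have hR := rotZ_mem_specialOrthogonalGroup θ
  have hconj := mul_blochAv_mul_transpose hR h v
  refine ⟨hconj, fun t => ?_⟩
  have hz (x : Fin 3 → ℝ) : x 2 = ![0, 0, 1] ⬝ᵥ x := by
    simp [dotProduct, Fin.sum_univ_three]
  rw [← hconj, ← Matrix.smul_mul, ← Matrix.mul_smul, exp_conj_of_mem_orthogonalGroup hR.1,
    hz (_ *ᵥ _), hz (_ *ᵥ _), dotProduct_mulVec_conj_of_mulVec_eq_self hR.1 (rotZ_mulVec_e3 θ)]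
end
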